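/- arXiv:1011.3480 — 4 statements merged into one kernel-verified Lean document; each statement's English description precedes it below -/
import Mathlib

section
/- Let s[1..n] be a string and C its array of previous-occurrence pointers. For all indices 1 ≤ i ≤ j ≤ n, the number of distinct characters occurring in the substring s[i..j] (i.e., the cardinality of the set {s[q] : i ≤ q ≤ j}) equals the cardinality of the set {q : i ≤ q ≤ j and C[q] < i}. -/
/-- `C` is the previous-occurrence array for the string `s[1..n]`:
`C q` is the largest `p < q` (with `p ≥ 1`) such that `s p = s q`, or `0` if none exists. -/
def prevOcc {α : Type*} (n : ℕ) (s : ℕ → α) (C : ℕ → ℕ) : Prop :=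
  ∀ q, 1 ≤ q → q ≤ n →
    (1 ≤ C q ∧ C q < q ∧ s (C q) = s q ∧ ∀ p, C q < p → p < q → s p ≠ s q) ∨
    (C q = 0 ∧ ∀ p, 1 ≤ p → p < q → s p ≠ s q)

/-!
The positions `q ∈ [i, j]` with `C q < i` are exactly the first occurrences of their characters
in the window `s[i..j]`. Hence `s` is injective on them, and every character of the window is
reached by following the pointers `C` backwards until they leave the window.
-/

namespace prevOcc

variable {α : Type*} {n : ℕ} {s : ℕ → α} {C : ℕ → ℕ}

lemma apply_ne_of_lt (hC : prevOcc n s C) {p q : ℕ} (hqn : q ≤ n) (hCp : C q < p)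
    (hpq : p < q) : s p ≠ s q := by
  rcases hC q (by omega) hqn with ⟨-, -, -, hmax⟩ | ⟨-, hnone⟩
  · exact hmax p hCp hpq
  · exact hnone p (by omega) hpq

lemma lt_and_apply_eq (hC : prevOcc n s C) {q : ℕ} (hq : 1 ≤ q) (hqn : q ≤ n)
    (hCq : 1 ≤ C q) : C q < q ∧ s (C q) = s q := by
  rcases hC q hq hqn with ⟨-, hlt, heq, -⟩ | ⟨h0, -⟩
  · exact ⟨hlt, heq⟩
  · omega

lemma injOn_filter_lt (hC : prevOcc n s C) {i j : ℕ} (hjn : j ≤ n) :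
    Set.InjOn s ((Finset.Icc i j).filter (fun q => C q < i)) := by
  have hfirst : ∀ p q, i ≤ p → q ≤ j → C q < i → p < q → s p ≠ s q :=
    fun p q hip hqj hCq hpq => hC.apply_ne_of_lt (by omega) (by omega) hpq
  intro p hp q hq hs
  simp only [Finset.coe_filter, Finset.mem_Icc, Set.mem_ofPred_eq] at hp hq
  rcases lt_trichotomy p q with hpq | rfl | hqp
  · exact absurd hs (hfirst p q hp.1.1 hq.1.2 hq.2 hpq)
  · rfl
  · exact absurd hs.symm (hfirst q p hq.1.1 hp.1.2 hp.2 hqp)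

lemma exists_le_lt_apply_eq (hC : prevOcc n s C) {i : ℕ} (hi : 1 ≤ i) :
    ∀ q, i ≤ q → q ≤ n → ∃ p, i ≤ p ∧ p ≤ q ∧ C p < i ∧ s p = s q := by
  intro q
  induction q using Nat.strong_induction_on with
  | _ q ih =>
    intro hiq hqn
    by_cases hCq : C q < i
    · exact ⟨q, hiq, le_rfl, hCq, rfl⟩
    obtain ⟨hlt, heq⟩ := hC.lt_and_apply_eq (by omega) hqn (by omega)
    obtain ⟨p, hip, hpq, hCp, hsp⟩ := ih (C q) hlt (by omega) (by omega)
    exact ⟨p, hip, by omega, hCp, hsp.trans heq⟩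

lemma image_filter_lt [DecidableEq α] (hC : prevOcc n s C) {i j : ℕ} (hi : 1 ≤ i)
    (hjn : j ≤ n) :
    ((Finset.Icc i j).filter (fun q => C q < i)).image s = (Finset.Icc i j).image s := by
  refine (Finset.image_subset_image (Finset.filter_subset _ _)).antisymm ?_
  simp only [Finset.subset_iff, Finset.mem_image, Finset.mem_filter, Finset.mem_Icc]
  rintro _ ⟨q, ⟨hiq, hqj⟩, rfl⟩
  obtain ⟨p, hip, hpq, hCp, hsp⟩ := hC.exists_le_lt_apply_eq hi q hiq (hqj.trans hjn)
  exact ⟨p, ⟨⟨hip, hpq.trans hqj⟩, hCp⟩, hsp⟩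

end prevOcc

theorem stmt_1_general {α : Type*} [DecidableEq α] (n : ℕ) (s : ℕ → α) (C : ℕ → ℕ)
    (hC : prevOcc n s C) (i j : ℕ) (hi : 1 ≤ i) (hjn : j ≤ n) :
    ((Finset.Icc i j).image s).card =
      ((Finset.Icc i j).filter (fun q => C q < i)).card := by
  rw [← hC.image_filter_lt hi hjn, Finset.card_image_of_injOn (hC.injOn_filter_lt hjn)]

theorem stmt_1 {α : Type*} [DecidableEq α] (n : ℕ) (s : ℕ → α) (C : ℕ → ℕ)
    (hC : prevOcc n s C) (i j : ℕ) (hi : 1 ≤ i) (hij : i ≤ j) (hjn : j ≤ n) :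
    ((Finset.Icc i j).image s).card =
      ((Finset.Icc i j).filter (fun q => C q < i)).card :=
  stmt_1_general n s C hC i j hi hjn
end

section
/- Let s[1..n] be a string with C its array of previous-occurrence pointers, and let σ be the number of distinct characters occurring in s. For any block [l, l+b−1] with 1 ≤ l and l+b−1 ≤ n (b ≥ 1), the cardinality of {q : l ≤ q ≤ l+b−1 and C[q] < l} equals the number of distinct characters occurring in s[l..l+b−1], and in particular is at most min(σ, b). -/
/-!
The positions `q` of a block with `C q < l` are exactly the first occurrences of their
characters inside the block, and in any finite ordered set of positions the first occurrences
are in bijection with the characters that occur.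
-/

section FirstOccurrence

variable {α β : Type*} [DecidableEq α] [LinearOrder β]

def firstOccurrences (S : Finset β) (s : β → α) : Finset β :=
  S.filter fun q => ∀ p ∈ S, p < q → s p ≠ s q

theorem injOn_firstOccurrences (S : Finset β) (s : β → α) :
    Set.InjOn s (firstOccurrences S s) := by
  intro q₁ hq₁ q₂ hq₂ heq
  simp only [firstOccurrences, Finset.coe_filter, Set.mem_ofPred_eq] at hq₁ hq₂
  by_contra hne
  rcases lt_or_gt_of_ne hne with hlt | hgt
  · exact hq₂.2 q₁ hq₁.1 hlt heq
  · exact hq₁.2 q₂ hq₂.1 hgt heq.symm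

theorem image_firstOccurrences (S : Finset β) (s : β → α) :
    (firstOccurrences S s).image s = S.image s := by
  refine (Finset.image_subset_image (Finset.filter_subset _ _)).antisymm ?_
  intro a ha
  obtain ⟨q, hqS, rfl⟩ := Finset.mem_image.1 ha
  set fiber := S.filter fun p => s p = s q
  have hfiber : fiber.Nonempty := ⟨q, Finset.mem_filter.2 ⟨hqS, rfl⟩⟩
  obtain ⟨hmS, hms⟩ := Finset.mem_filter.1 (fiber.min'_mem hfiber)
  refine Finset.mem_image.2 ⟨fiber.min' hfiber, Finset.mem_filter.2 ⟨hmS, ?_⟩, hms⟩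
  intro p hpS hlt hps
  exact absurd (fiber.min'_le p (Finset.mem_filter.2 ⟨hpS, hps.trans hms⟩)) (not_le.2 hlt)

theorem card_firstOccurrences (S : Finset β) (s : β → α) :
    (firstOccurrences S s).card = (S.image s).card := by
  rw [← image_firstOccurrences, Finset.card_image_of_injOn (injOn_firstOccurrences S s)]

end FirstOccurrence

theorem prevOcc.lt_iff_forall_ne {α : Type*} {n : ℕ} {s : ℕ → α} {C : ℕ → ℕ}
    (hC : prevOcc n s C) {l q : ℕ} (hl : 1 ≤ l) (hq : 1 ≤ q) (hqn : q ≤ n) :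
    C q < l ↔ ∀ p, l ≤ p → p < q → s p ≠ s q := by
  rcases hC q hq hqn with ⟨-, hCq, hsC, hmax⟩ | ⟨hC0, hnone⟩
  · refine ⟨fun h p hlp => hmax p (h.trans_le hlp), fun h => ?_⟩
    by_contra! hlC
    exact h (C q) hlC hCq hsC
  · exact ⟨fun _ p hlp => hnone p (hl.trans hlp), fun _ => hC0 ▸ hl⟩

theorem prevOcc.filter_lt_eq_firstOccurrences {α : Type*} [DecidableEq α] {n : ℕ} {s : ℕ → α}
    {C : ℕ → ℕ} (hC : prevOcc n s C) {l r : ℕ} (hl : 1 ≤ l) (hrn : r ≤ n) :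
    (Finset.Icc l r).filter (fun q => C q < l) = firstOccurrences (Finset.Icc l r) s := by
  refine Finset.filter_congr fun q hq => ?_
  obtain ⟨hlq, hqr⟩ := Finset.mem_Icc.1 hq
  rw [hC.lt_iff_forall_ne hl (hl.trans hlq) (hqr.trans hrn)]
  simp only [Finset.mem_Icc]
  exact ⟨fun h p hp hpq => h p hp.1 hpq, fun h p hlp hpq => h p ⟨hlp, hpq.le.trans hqr⟩ hpq⟩

theorem stmt_2_general {α : Type*} [DecidableEq α] (n : ℕ) (s : ℕ → α) (C : ℕ → ℕ)
    (hC : prevOcc n s C) (l b : ℕ) (hl : 1 ≤ l) (hn : l + b - 1 ≤ n) :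
    ((Finset.Icc l (l + b - 1)).filter (fun q => C q < l)).card =
        ((Finset.Icc l (l + b - 1)).image s).card ∧
      ((Finset.Icc l (l + b - 1)).filter (fun q => C q < l)).card ≤
        min (((Finset.Icc 1 n).image s).card) b := by
  have hcard : ((Finset.Icc l (l + b - 1)).filter (fun q => C q < l)).card =
      ((Finset.Icc l (l + b - 1)).image s).card := by
    rw [hC.filter_lt_eq_firstOccurrences hl hn, card_firstOccurrences]
  refine ⟨hcard, hcard ▸ le_min ?_ ?_⟩
  · exact Finset.card_le_card <| Finset.image_subset_image <| Finset.Icc_subset_Icc hl hn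
  · calc ((Finset.Icc l (l + b - 1)).image s).card ≤ (Finset.Icc l (l + b - 1)).card :=
          Finset.card_image_le
      _ = b := by rw [Nat.card_Icc]; omega

theorem stmt_2 {α : Type*} [DecidableEq α] (n : ℕ) (s : ℕ → α) (C : ℕ → ℕ)
    (hC : prevOcc n s C) (l b : ℕ) (hl : 1 ≤ l) (hb : 1 ≤ b) (hn : l + b - 1 ≤ n) :
    ((Finset.Icc l (l + b - 1)).filter (fun q => C q < l)).card =
        ((Finset.Icc l (l + b - 1)).image s).card ∧
      ((Finset.Icc l (l + b - 1)).filter (fun q => C q < l)).card ≤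
        min (((Finset.Icc 1 n).image s).card) b :=
  stmt_2_general n s C hC l b hl hn
end

section
/- Let s[1..n] be a string with C its array of previous-occurrence pointers, and let H₀(s) be its 0th-order empirical entropy. Then the sum over all positions q with C[q] ≥ 1 of log₂(q − C[q]) is at most n·H₀(s) + 2n. -/
/-- The 0th-order empirical entropy `H₀` of the string `s[1..n]`:
`∑_c (n_c/n)·log₂(n/n_c)` over the characters `c` occurring in `s`,
where `n_c` is the number of occurrences of `c` in `s[1..n]`. -/
noncomputable def H0 {α : Type*} [DecidableEq α] (n : ℕ) (s : ℕ → α) : ℝ :=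
  ∑ c ∈ (Finset.Icc 1 n).image s,
    (((Finset.Icc 1 n).filter (fun q => s q = c)).card : ℝ) / n *
      Real.logb 2 ((n : ℝ) / ((Finset.Icc 1 n).filter (fun q => s q = c)).card)

/-! Group the positions by character. For the occurrences `q` of a character `c`, the intervals
`(C q, q]` are pairwise disjoint subsets of `[1, n]`, so the `m = n_c - 1` gaps `q - C q` with
`C q ≥ 1` sum to at most `n`. By concavity of `log` their log-sum is at most `m log(n/m)`, and
`m log(n/m) ≤ n_c log(n/n_c) + log₂ e` because `m log(1 + 1/m) ≤ log e`. Summing over the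
characters gives `n H₀(s)` plus at most `2` per character. -/

open Finset Real

theorem sum_log_le_card_mul_log_div {ι : Type*} (t : Finset ι) {g : ι → ℝ} {N : ℝ}
    (hg : ∀ i ∈ t, 0 < g i) (hN : ∑ i ∈ t, g i ≤ N) :
    ∑ i ∈ t, log (g i) ≤ #t * log (N / #t) := by
  rcases t.eq_empty_or_nonempty with rfl | ht
  · simp
  have hcard : (0 : ℝ) < #t := by exact_mod_cast ht.card_pos
  have hjensen := strictConcaveOn_log_Ioi.concaveOn.le_map_sum (t := t)
    (w := fun _ => (#t : ℝ)⁻¹) (p := g) (fun _ _ => by positivity)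
    (by simp [hcard.ne']) hg
  simp only [smul_eq_mul, ← mul_sum] at hjensen
  have hmean : 0 < (#t : ℝ)⁻¹ * ∑ i ∈ t, g i := mul_pos (by positivity) (sum_pos hg ht)
  calc ∑ i ∈ t, log (g i) = #t * ((#t : ℝ)⁻¹ * ∑ i ∈ t, log (g i)) := by field_simp
    _ ≤ #t * log ((#t : ℝ)⁻¹ * ∑ i ∈ t, g i) := by gcongr
    _ ≤ #t * log (N / #t) := by
      gcongr
      rw [inv_mul_eq_div]
      gcongr

theorem mul_log_div_le_succ_mul_log_div_add_one {m N : ℝ} (hm : 0 ≤ m) (hN : m + 1 ≤ N) :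
    m * log (N / m) ≤ (m + 1) * log (N / (m + 1)) + 1 := by
  rcases hm.eq_or_lt with rfl | hm
  · have := log_nonneg (by linarith : (1 : ℝ) ≤ N)
    simp
    linarith
  have hratio : m * log ((m + 1) / m) ≤ 1 := by
    have := log_le_sub_one_of_pos (by positivity : 0 < (m + 1) / m)
    calc m * log ((m + 1) / m) ≤ m * ((m + 1) / m - 1) := by gcongr
      _ = 1 := by field_simp; ring
  have hmono : log (m + 1) ≤ log N := log_le_log (by positivity) hN
  rw [log_div (by positivity) hm.ne'] at hratio
  rw [log_div (by linarith) hm.ne', log_div (by linarith) (by positivity)]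
  nlinarith

def occurrences {α : Type*} [DecidableEq α] (n : ℕ) (s : ℕ → α) (c : α) : Finset ℕ :=
  (Icc 1 n).filter (fun q => s q = c)

theorem sum_card_occurrences {α : Type*} [DecidableEq α] (n : ℕ) (s : ℕ → α) :
    ∑ c ∈ (Icc 1 n).image s, #(occurrences n s c) = n := by
  simpa [occurrences] using (card_eq_sum_card_image s (Icc 1 n)).symm

theorem occurrences_nonempty_of_mem_image {α : Type*} [DecidableEq α] {n : ℕ} {s : ℕ → α}
    {c : α} (hc : c ∈ (Icc 1 n).image s) : (occurrences n s c).Nonempty := by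
  obtain ⟨q, hq, rfl⟩ := mem_image.mp hc
  exact ⟨q, mem_filter.mpr ⟨hq, rfl⟩⟩

theorem card_occurrences_le {α : Type*} [DecidableEq α] (n : ℕ) (s : ℕ → α) (c : α) :
    #(occurrences n s c) ≤ n :=
  (card_filter_le _ _).trans (by simp)

theorem mul_H0_eq {α : Type*} [DecidableEq α] (n : ℕ) (s : ℕ → α) :
    n * H0 n s = ∑ c ∈ (Icc 1 n).image s,
      (#(occurrences n s c) : ℝ) * logb 2 (n / #(occurrences n s c)) := by
  rw [H0, mul_sum]
  refine sum_congr rfl fun c hc => ?_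
  obtain ⟨q, hq, -⟩ := mem_image.mp hc
  have hn : (n : ℝ) ≠ 0 := Nat.cast_ne_zero.mpr (by grind)
  rw [occurrences]
  field_simp

namespace prevOcc

variable {α : Type*} {n : ℕ} {s : ℕ → α} {C : ℕ → ℕ}

theorem lt_and_apply_eq_of_pos (hC : prevOcc n s C) {q : ℕ} (hq : q ∈ Icc 1 n) (hCq : 1 ≤ C q) :
    C q < q ∧ s (C q) = s q := by
  rw [mem_Icc] at hq
  rcases hC q hq.1 hq.2 with ⟨-, hlt, heq, -⟩ | ⟨h0, -⟩
  · exact ⟨hlt, heq⟩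
  · omega

theorem le_apply_of_lt (hC : prevOcc n s C) {p q : ℕ} (hp : 1 ≤ p) (hpq : p < q) (hq : q ≤ n)
    (hs : s p = s q) : p ≤ C q := by
  rcases hC q (by omega) hq with ⟨-, -, -, hmax⟩ | ⟨-, hnone⟩
  · by_contra h
    exact hmax p (by omega) hpq hs
  · exact absurd hs (hnone p hp hpq)

variable [DecidableEq α]

theorem pairwiseDisjoint_Ioc (hC : prevOcc n s C) (c : α) :
    (occurrences n s c : Set ℕ).PairwiseDisjoint (fun q => Ioc (C q) q) := by
  have key : ∀ p ∈ occurrences n s c, ∀ q ∈ occurrences n s c, p < q →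
      Disjoint (Ioc (C p) p) (Ioc (C q) q) := by
    intro p hp q hq hpq
    simp only [occurrences, mem_filter, mem_Icc] at hp hq
    exact Ioc_disjoint_Ioc_of_le (hC.le_apply_of_lt hp.1.1 hpq hq.1.2 (hp.2.trans hq.2.symm))
  intro p hp q hq hne
  rcases hne.lt_or_gt with h | h
  · exact key p hp q hq h
  · exact (key q hq p hp h).symm

theorem sum_sub_le (hC : prevOcc n s C) (c : α) :
    ∑ q ∈ occurrences n s c, (q - C q) ≤ n := by
  have hsub : (occurrences n s c).biUnion (fun q => Ioc (C q) q) ⊆ Icc 1 n := by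
    intro z hz
    obtain ⟨q, hq, hzq⟩ := mem_biUnion.mp hz
    simp only [occurrences, mem_filter, mem_Icc, mem_Ioc] at hq hzq ⊢
    omega
  calc ∑ q ∈ occurrences n s c, (q - C q)
      = ∑ q ∈ occurrences n s c, #(Ioc (C q) q) := by simp
    _ = #((occurrences n s c).biUnion (fun q => Ioc (C q) q)) :=
      (card_biUnion (hC.pairwiseDisjoint_Ioc c)).symm
    _ ≤ #(Icc 1 n) := card_le_card hsub
    _ = n := by simp

theorem filter_pos_eq_erase_min' (hC : prevOcc n s C) {c : α}
    (h : (occurrences n s c).Nonempty) :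
    (occurrences n s c).filter (fun q => 1 ≤ C q) =
      (occurrences n s c).erase ((occurrences n s c).min' h) := by
  set q₀ := (occurrences n s c).min' h
  have hq₀ : q₀ ∈ occurrences n s c := min'_mem _ h
  ext q
  simp only [mem_filter, mem_erase]
  constructor
  · rintro ⟨hq, hCq⟩
    refine ⟨fun hqq₀ => ?_, hq⟩
    subst hqq₀
    have hocc := mem_filter.mp hq
    obtain ⟨hlt, heq⟩ := hC.lt_and_apply_eq_of_pos hocc.1 hCq
    have : C q₀ ∈ occurrences n s c :=
      mem_filter.mpr ⟨mem_Icc.mpr ⟨hCq, by grind⟩, heq.trans hocc.2⟩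
    exact absurd (min'_le _ _ this) (by omega)
  · rintro ⟨hne, hq⟩
    have hlt : q₀ < q := lt_of_le_of_ne (min'_le _ _ hq) (Ne.symm hne)
    obtain ⟨hq₀I, hq₀c⟩ := mem_filter.mp hq₀
    obtain ⟨hqI, hqc⟩ := mem_filter.mp hq
    have hpos := (mem_Icc.mp hq₀I).1
    exact ⟨hq, hpos.trans (hC.le_apply_of_lt hpos hlt (mem_Icc.mp hqI).2 (hq₀c.trans hqc.symm))⟩

theorem sum_log_sub_le (hC : prevOcc n s C) {c : α} (h : (occurrences n s c).Nonempty) :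
    ∑ q ∈ (occurrences n s c).filter (fun q => 1 ≤ C q), log ((q : ℝ) - C q) ≤
      #(occurrences n s c) * log (n / #(occurrences n s c)) + 1 := by
  set T := (occurrences n s c).filter (fun q => 1 ≤ C q) with hT_def
  have hT : ∀ q ∈ T, C q < q := fun q hq =>
    (hC.lt_and_apply_eq_of_pos (mem_filter.mp (mem_filter.mp hq).1).1 (mem_filter.mp hq).2).1
  have hcard : (#T : ℝ) + 1 = #(occurrences n s c) := by
    rw [hT_def, hC.filter_pos_eq_erase_min' h, card_erase_of_mem (min'_mem _ h)]
    have := h.card_pos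
    norm_cast
    omega
  have hgaps : ∑ q ∈ T, ((q : ℝ) - C q) ≤ n := by
    have hnat : ∑ q ∈ T, (q - C q) ≤ n :=
      (sum_le_sum_of_subset (filter_subset _ _)).trans (hC.sum_sub_le c)
    calc ∑ q ∈ T, ((q : ℝ) - C q) = ((∑ q ∈ T, (q - C q) : ℕ) : ℝ) := by
          push_cast
          exact sum_congr rfl fun q hq => by rw [Nat.cast_sub (hT q hq).le]
      _ ≤ n := by exact_mod_cast hnat
  have hsize : (#T : ℝ) + 1 ≤ n := hcard ▸ by exact_mod_cast card_occurrences_le n s c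
  calc ∑ q ∈ T, log ((q : ℝ) - C q) ≤ #T * log (n / #T) :=
        sum_log_le_card_mul_log_div T (fun q hq => by simpa using hT q hq) hgaps
    _ ≤ (#T + 1) * log (n / (#T + 1)) + 1 :=
        mul_log_div_le_succ_mul_log_div_add_one (Nat.cast_nonneg _) hsize
    _ = _ := by rw [hcard]

theorem sum_logb_sub_le (hC : prevOcc n s C) {c : α} (h : (occurrences n s c).Nonempty) :
    ∑ q ∈ (occurrences n s c).filter (fun q => 1 ≤ C q), logb 2 ((q : ℝ) - C q) ≤
      #(occurrences n s c) * logb 2 (n / #(occurrences n s c)) + 2 * #(occurrences n s c) := by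
  have hlog2 : 0 < log 2 := log_pos one_lt_two
  have hinv : (log 2)⁻¹ ≤ 2 * #(occurrences n s c) := by
    have : (1 : ℝ) ≤ #(occurrences n s c) := by exact_mod_cast h.card_pos
    have : (2 : ℝ)⁻¹ < log 2 := by linarith [log_two_gt_d9]
    have : (log 2)⁻¹ < 2 := by rwa [inv_lt_comm₀ hlog2 two_pos]
    linarith
  simp only [logb, ← sum_div]
  calc (∑ q ∈ (occurrences n s c).filter (fun q => 1 ≤ C q), log ((q : ℝ) - C q)) / log 2
      ≤ (#(occurrences n s c) * log (n / #(occurrences n s c)) + 1) / log 2 := by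
        gcongr
        exact hC.sum_log_sub_le h
    _ ≤ _ := by
        rw [add_div, one_div, mul_div_assoc]
        gcongr

end prevOcc

theorem stmt_5_general {α : Type*} [DecidableEq α] (n : ℕ)
    (s : ℕ → α) (C : ℕ → ℕ) (hC : prevOcc n s C) :
    ∑ q ∈ (Finset.Icc 1 n).filter (fun q => 1 ≤ C q),
        Real.logb 2 ((q : ℝ) - (C q : ℝ)) ≤
      n * H0 n s + 2 * n := by
  have hfiber : ∀ c, ((Icc 1 n).filter (fun q => 1 ≤ C q)).filter (fun q => s q = c) =
      (occurrences n s c).filter (fun q => 1 ≤ C q) := fun c => filter_comm _ _ _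
  rw [← sum_fiberwise_of_maps_to (t := (Icc 1 n).image s)
    (fun q hq => mem_image_of_mem s (mem_filter.mp hq).1)]
  calc ∑ c ∈ (Icc 1 n).image s, ∑ q ∈ ((Icc 1 n).filter (fun q => 1 ≤ C q)).filter
        (fun q => s q = c), logb 2 ((q : ℝ) - C q)
      ≤ ∑ c ∈ (Icc 1 n).image s, ((#(occurrences n s c) : ℝ) *
          logb 2 (n / #(occurrences n s c)) + 2 * #(occurrences n s c)) :=
        sum_le_sum fun c hc => hfiber c ▸ hC.sum_logb_sub_le (occurrences_nonempty_of_mem_image hc)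
    _ = n * H0 n s + 2 * n := by
        have hcount : ∑ c ∈ (Icc 1 n).image s, (#(occurrences n s c) : ℝ) = n := by
          exact_mod_cast sum_card_occurrences n s
        rw [sum_add_distrib, ← mul_sum, mul_H0_eq, hcount]

theorem stmt_5 {α : Type*} [DecidableEq α] (n : ℕ) (hn : 1 ≤ n)
    (s : ℕ → α) (C : ℕ → ℕ) (hC : prevOcc n s C) :
    ∑ q ∈ (Finset.Icc 1 n).filter (fun q => 1 ≤ C q),
        Real.logb 2 ((q : ℝ) - (C q : ℝ)) ≤
      n * H0 n s + 2 * n :=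
  stmt_5_general n s C hC
end

section
/- Let s[1..n] be a string with previous-occurrence array C, let 1 ≤ j ≤ n, let x = s[j], and let y ≠ x be a character. Let s' be the string equal to s except that s'[j] = y, with previous-occurrence array C'. Define i_x = C[j] (the largest p < j with s[p] = x, or 0), and i_y = the largest p < j with s[p] = y (or 0 if none). Suppose there exist occurrences of x and of y in s strictly after position j, and let k_x = the smallest q > j with s[q] = x and k_y = the smallest q > j with s[q] = y. Then: C'[j] = i_y, C'[k_x] = i_x, C'[k_y] = j, and C'[q] = C[q] for every q ∈ [1,n] with q ∉ {j, k_x, k_y}. -/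
def IsLastOccBefore {α : Type*} (s : ℕ → α) (a : α) (q c : ℕ) : Prop :=
  (1 ≤ c ∧ c < q ∧ s c = a ∧ ∀ p, c < p → p < q → s p ≠ a) ∨
  (c = 0 ∧ ∀ p, 1 ≤ p → p < q → s p ≠ a)

namespace IsLastOccBefore

variable {α : Type*} {s t : ℕ → α} {a : α} {q c : ℕ}

theorem unique {d : ℕ} (hc : IsLastOccBefore s a q c) (hd : IsLastOccBefore s a q d) :
    c = d := by
  rcases hc with ⟨hc1, hcq, hsc, hc⟩ | ⟨rfl, hc⟩ <;>
    rcases hd with ⟨hd1, hdq, hsd, hd⟩ | ⟨rfl, hd⟩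
  · rcases lt_trichotomy c d with h | h | h
    · exact absurd hsd (hc d h hdq)
    · exact h
    · exact absurd hsc (hd c h hcq)
  · exact absurd hsc (hd c hc1 hcq)
  · exact absurd hsd (hc d hd1 hdq)
  · rfl

theorem le_of_apply_eq {m : ℕ} (hc : IsLastOccBefore s a q c) (hm1 : 1 ≤ m) (hmq : m < q)
    (hsm : s m = a) : m ≤ c := by
  rcases hc with ⟨-, -, -, hc⟩ | ⟨-, hc⟩
  · by_contra! hcm
    exact hc m hcm hmq hsm
  · exact absurd hsm (hc m hm1 hmq)

theorem congr (h : ∀ p, 1 ≤ p → p < q → (s p = a ↔ t p = a))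
    (hc : IsLastOccBefore s a q c) : IsLastOccBefore t a q c := by
  rcases hc with ⟨hc1, hcq, hsc, hc⟩ | ⟨hc0, hc⟩
  · exact Or.inl ⟨hc1, hcq, (h c hc1 hcq).1 hsc,
      fun p hcp hpq htp => hc p hcp hpq ((h p (by omega) hpq).2 htp)⟩
  · exact Or.inr ⟨hc0, fun p hp1 hpq htp => hc p hp1 hpq ((h p hp1 hpq).2 htp)⟩

theorem congr_of_apply_eq {m : ℕ} (hm1 : 1 ≤ m) (hmq : m < q) (hsm : s m = a)
    (h : ∀ p, m ≤ p → p < q → (s p = a ↔ t p = a))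
    (hc : IsLastOccBefore s a q c) : IsLastOccBefore t a q c := by
  have hmc := hc.le_of_apply_eq hm1 hmq hsm
  rcases hc with ⟨hc1, hcq, hsc, hc⟩ | ⟨rfl, -⟩
  · exact Or.inl ⟨hc1, hcq, (h c hmc hcq).1 hsc,
      fun p hcp hpq htp => hc p hcp hpq ((h p (by omega) hpq).2 htp)⟩
  · omega

theorem mono {r : ℕ} (hqr : q ≤ r) (h : ∀ p, q ≤ p → p < r → s p ≠ a)
    (hc : IsLastOccBefore s a q c) : IsLastOccBefore s a r c := by
  rcases hc with ⟨hc1, hcq, hsc, hc⟩ | ⟨hc0, hc⟩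
  · refine Or.inl ⟨hc1, by omega, hsc, fun p hcp hpr => ?_⟩
    rcases lt_or_ge p q with hpq | hqp
    · exact hc p hcp hpq
    · exact h p hqp hpr
  · refine Or.inr ⟨hc0, fun p hp1 hpr => ?_⟩
    rcases lt_or_ge p q with hpq | hqp
    · exact hc p hp1 hpq
    · exact h p hqp hpr

theorem of_eq_except {j : ℕ} (hst : ∀ p, p ≠ j → t p = s p) (hqj : q ≠ j)
    (hj : j < q → (s j = s q ↔ t j = s q) ∨ ∃ m, j < m ∧ m < q ∧ s m = s q)
    (hc : IsLastOccBefore s (s q) q c) : IsLastOccBefore t (t q) q c := by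
  rw [hst q hqj]
  rcases lt_or_gt_of_ne hqj with hqj | hjq
  · exact hc.congr fun p _ hpq => by rw [hst p (by omega)]
  · rcases hj hjq with hiff | ⟨m, hjm, hmq, hsm⟩
    · refine hc.congr fun p _ _ => ?_
      rcases eq_or_ne p j with rfl | hpj
      · exact hiff
      · rw [hst p hpj]
    · exact hc.congr_of_apply_eq (by omega) hmq hsm fun p hmp _ => by rw [hst p (by omega)]

end IsLastOccBefore

theorem prevOcc.eq_of_isLastOccBefore {α : Type*} {n : ℕ} {s : ℕ → α} {C : ℕ → ℕ}
    (hC : prevOcc n s C) {q c : ℕ} (hq1 : 1 ≤ q) (hqn : q ≤ n)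
    (hc : IsLastOccBefore s (s q) q c) : C q = c :=
  IsLastOccBefore.unique (hC q hq1 hqn) hc

theorem stmt_13 {α : Type*} (n : ℕ) (s s' : ℕ → α) (C C' : ℕ → ℕ)
    (j : ℕ) (hj1 : 1 ≤ j) (hjn : j ≤ n) (x y : α) (hx : s j = x) (hxy : y ≠ x)
    (hs'j : s' j = y) (hs' : ∀ q, q ≠ j → s' q = s q)
    (hC : prevOcc n s C) (hC' : prevOcc n s' C')
    (i_x : ℕ) (hix : i_x = C j)
    (i_y : ℕ)
    (hiy : (1 ≤ i_y ∧ i_y < j ∧ s i_y = y ∧ ∀ p, i_y < p → p < j → s p ≠ y) ∨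
           (i_y = 0 ∧ ∀ p, 1 ≤ p → p < j → s p ≠ y))
    (k_x : ℕ) (hkx1 : j < k_x) (hkxn : k_x ≤ n) (hkxocc : s k_x = x)
    (hkxmin : ∀ q, j < q → q < k_x → s q ≠ x)
    (k_y : ℕ) (hky1 : j < k_y) (hkyn : k_y ≤ n) (hkyocc : s k_y = y)
    (hkymin : ∀ q, j < q → q < k_y → s q ≠ y) :
    C' j = i_y ∧ C' k_x = i_x ∧ C' k_y = j ∧
      ∀ q, 1 ≤ q → q ≤ n → q ≠ j → q ≠ k_x → q ≠ k_y → C' q = C q := by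
  have agree_before_j : ∀ a p, 1 ≤ p → p < j → (s p = a ↔ s' p = a) := fun a p _ hpj => by
    rw [hs' p hpj.ne]
  refine ⟨?_, ?_, ?_, ?_⟩
  · refine hC'.eq_of_isLastOccBefore hj1 hjn ?_
    rw [hs'j]
    exact IsLastOccBefore.congr (agree_before_j y) hiy
  · have hix' : IsLastOccBefore s x j i_x := hix ▸ hx ▸ hC j hj1 hjn
    refine hC'.eq_of_isLastOccBefore (by omega) hkxn ?_
    rw [hs' k_x hkx1.ne', hkxocc]
    refine (hix'.congr (agree_before_j x)).mono hkx1.le fun p hjp hpk => ?_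
    rcases hjp.eq_or_lt with rfl | hjp
    · rwa [hs'j]
    · rw [hs' p hjp.ne']
      exact hkxmin p hjp hpk
  · refine hC'.eq_of_isLastOccBefore (by omega) hkyn (Or.inl ⟨hj1, hky1, ?_, fun p hjp hpk => ?_⟩)
    · rw [hs'j, hs' k_y hky1.ne', hkyocc]
    · rw [hs' k_y hky1.ne', hkyocc, hs' p (by omega)]
      exact hkymin p hjp hpk
  · intro q hq1 hqn hqj hqkx hqky
    refine hC'.eq_of_isLastOccBefore hq1 hqn
      (IsLastOccBefore.of_eq_except hs' hqj (fun hjq => ?_) (hC q hq1 hqn))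
    by_cases hqx : s q = x
    · have hkq : k_x < q := by
        by_contra! hqk
        exact hkxmin q hjq (by omega) hqx
      exact Or.inr ⟨k_x, hkx1, hkq, hkxocc.trans hqx.symm⟩
    by_cases hqy : s q = y
    · have hkq : k_y < q := by
        by_contra! hqk
        exact hkymin q hjq (by omega) hqy
      exact Or.inr ⟨k_y, hky1, hkq, hkyocc.trans hqy.symm⟩
    exact Or.inl (iff_of_false (hx ▸ Ne.symm hqx) (hs'j ▸ Ne.symm hqy))
end
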